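/- arXiv:1401.1700 — 5 statements merged into one kernel-verified Lean document; each statement's English description precedes it below -/
import Mathlib

section
/- Let (X, 𝓑) be a simple (v, k, λ)-BIBD such that for all distinct blocks B, C ∈ 𝓑 the symmetric difference B Δ C is again a block of 𝓑. Then any two distinct blocks B, C ∈ 𝓑 intersect in exactly λ points: |B ∩ C| = λ. -/
open scoped symmDiff

/-- `(X, 𝓑)` is a simple `(v, k, λ)`-BIBD: `X` has `v` points, every block has
exactly `k` points, every pair of distinct points lies in exactly `λ` blocks,
and `v > k ≥ 2`. -/
def IsBIBD (X : Type*) [Fintype X] [DecidableEq X]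
    (𝓑 : Finset (Finset X)) (v k l : ℕ) : Prop :=
  Fintype.card X = v ∧
  (∀ B ∈ 𝓑, B.card = k) ∧
  (∀ x y : X, x ≠ y → (𝓑.filter fun B => x ∈ B ∧ y ∈ B).card = l) ∧
  k < v ∧ 2 ≤ k

theorem stmt_2 {X : Type*} [Fintype X] [DecidableEq X]
    (𝓑 : Finset (Finset X)) (v k l : ℕ)
    (hBIBD : IsBIBD X 𝓑 v k l)
    (hΔ : ∀ B ∈ 𝓑, ∀ C ∈ 𝓑, B ≠ C → B ∆ C ∈ 𝓑) :
    ∀ B ∈ 𝓑, ∀ C ∈ 𝓑, B ≠ C → (B ∩ C).card = l := by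
  classical
  obtain ⟨hv, hk, hl, hkv, hk2⟩ := hBIBD
  intro B hB C hC hne
  -- Step 1: any two distinct blocks meet in exactly k/2 points.
  have key : ∀ P ∈ 𝓑, ∀ Q ∈ 𝓑, P ≠ Q → 2 * (P ∩ Q).card = k := by
    intro P hP Q hQ hPQ
    have hPQk : (P ∆ Q).card = k := hk _ (hΔ P hP Q hQ hPQ)
    have hsd : (P ∆ Q).card + 2 * (P ∩ Q).card = P.card + Q.card := by
      rw [symmDiff_def]
      have hd : Disjoint (P \ Q) (Q \ P) := disjoint_sdiff_sdiff
      rw [Finset.sup_eq_union, Finset.card_union_of_disjoint hd]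
      have h1 := Finset.card_inter_add_card_sdiff P Q
      have h2 := Finset.card_inter_add_card_sdiff Q P
      have h3 : (P ∩ Q).card = (Q ∩ P).card := by rw [Finset.inter_comm]
      omega
    have := hk P hP; have := hk Q hQ; omega
  set m := (B ∩ C).card with hm
  have hkm : k = 2 * m := (key B hB C hC hne).symm
  have hm1 : 1 ≤ m := by omega
  -- pick x ∈ B ∩ C and y ∈ B \ C
  obtain ⟨x, hx⟩ : (B ∩ C).Nonempty := Finset.card_pos.mp (by omega)
  have hBC : (B \ C).Nonempty := by
    apply Finset.card_pos.mp
    have := Finset.card_inter_add_card_sdiff B C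
    have := hk B hB
    omega
  obtain ⟨y, hy⟩ := hBC
  have hxB : x ∈ B := (Finset.mem_inter.mp hx).1
  have hxC : x ∈ C := (Finset.mem_inter.mp hx).2
  have hyB : y ∈ B := (Finset.mem_sdiff.mp hy).1
  have hyC : y ∉ C := (Finset.mem_sdiff.mp hy).2
  have hxy : x ≠ y := fun h => hyC (h ▸ hxC)
  have hlxy : (𝓑.filter fun D => x ∈ D ∧ y ∈ D).card = l := hl x y hxy
  -- blocks are nonempty
  have hne0 : ∀ D ∈ 𝓑, D ≠ ∅ := by
    intro D hD h
    have := hk D hD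
    rw [h] at this
    simp at this
    omega
  -- n11 = n00 + 1 via D ↦ D ∆ B
  have bij1 : ((𝓑.filter fun D => x ∈ D ∧ y ∈ D).erase B).card
      = (𝓑.filter fun D => x ∉ D ∧ y ∉ D).card := by
    apply Finset.card_bij (fun D _ => D ∆ B)
    · intro D hD
      simp only [Finset.mem_erase, Finset.mem_filter] at hD
      obtain ⟨hDB, hD𝓑, hxD, hyD⟩ := hD
      simp only [Finset.mem_filter, Finset.mem_symmDiff]
      exact ⟨hΔ D hD𝓑 B hB hDB, by tauto, by tauto⟩
    · intro D1 h1 D2 h2 h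
      have : D1 ∆ B ∆ B = D2 ∆ B ∆ B := by rw [h]
      rwa [symmDiff_symmDiff_cancel_right, symmDiff_symmDiff_cancel_right] at this
    · intro E hE
      simp only [Finset.mem_filter, Finset.mem_symmDiff] at hE
      obtain ⟨hE𝓑, hxE, hyE⟩ := hE
      have hEB : E ≠ B := fun h => hxE (h ▸ hxB)
      refine ⟨E ∆ B, ?_, symmDiff_symmDiff_cancel_right B E⟩
      simp only [Finset.mem_erase, Finset.mem_filter, Finset.mem_symmDiff]
      refine ⟨?_, hΔ E hE𝓑 B hB hEB, by tauto, by tauto⟩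
      intro h
      have : E = ∅ := by
        have := congrArg (· ∆ B) h
        simpa [symmDiff_symmDiff_cancel_right] using this
      exact hne0 E hE𝓑 this
  -- n10 = n00 + 1 via D ↦ D ∆ C
  have bij2 : ((𝓑.filter fun D => x ∈ D ∧ y ∉ D).erase C).card
      = (𝓑.filter fun D => x ∉ D ∧ y ∉ D).card := by
    apply Finset.card_bij (fun D _ => D ∆ C)
    · intro D hD
      simp only [Finset.mem_erase, Finset.mem_filter] at hD
      obtain ⟨hDC, hD𝓑, hxD, hyD⟩ := hD
      simp only [Finset.mem_filter, Finset.mem_symmDiff]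
      exact ⟨hΔ D hD𝓑 C hC hDC, by tauto, by tauto⟩
    · intro D1 h1 D2 h2 h
      have : D1 ∆ C ∆ C = D2 ∆ C ∆ C := by rw [h]
      rwa [symmDiff_symmDiff_cancel_right, symmDiff_symmDiff_cancel_right] at this
    · intro E hE
      simp only [Finset.mem_filter, Finset.mem_symmDiff] at hE
      obtain ⟨hE𝓑, hxE, hyE⟩ := hE
      have hEC : E ≠ C := fun h => hxE (h ▸ hxC)
      refine ⟨E ∆ C, ?_, symmDiff_symmDiff_cancel_right C E⟩
      simp only [Finset.mem_erase, Finset.mem_filter, Finset.mem_symmDiff]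
      refine ⟨?_, hΔ E hE𝓑 C hC hEC, by tauto, by tauto⟩
      intro h
      have : E = ∅ := by
        have := congrArg (· ∆ C) h
        simpa [symmDiff_symmDiff_cancel_right] using this
      exact hne0 E hE𝓑 this
  have hBmem : B ∈ 𝓑.filter fun D => x ∈ D ∧ y ∈ D := by
    simp [Finset.mem_filter, hB, hxB, hyB]
  have hCmem : C ∈ 𝓑.filter fun D => x ∈ D ∧ y ∉ D := by
    simp [Finset.mem_filter, hC, hxC, hyC]
  have e11 : (𝓑.filter fun D => x ∈ D ∧ y ∈ D).card
      = (𝓑.filter fun D => x ∉ D ∧ y ∉ D).card + 1 := by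
    rw [← bij1, Finset.card_erase_of_mem hBmem]
    have : 1 ≤ (𝓑.filter fun D => x ∈ D ∧ y ∈ D).card :=
      Finset.card_pos.mpr ⟨B, hBmem⟩
    omega
  have e10 : (𝓑.filter fun D => x ∈ D ∧ y ∉ D).card
      = (𝓑.filter fun D => x ∉ D ∧ y ∉ D).card + 1 := by
    rw [← bij2, Finset.card_erase_of_mem hCmem]
    have : 1 ≤ (𝓑.filter fun D => x ∈ D ∧ y ∉ D).card :=
      Finset.card_pos.mpr ⟨C, hCmem⟩
    omega
  -- x lies in exactly 2l blocks
  have hrx : (𝓑.filter fun D => x ∈ D).card = 2 * l := by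
    have hsplit := Finset.card_filter_add_card_filter_not
      (s := 𝓑.filter fun D => x ∈ D) (p := fun D => y ∈ D)
    rw [Finset.filter_filter, Finset.filter_filter] at hsplit
    simp only [hlxy] at *
    omega
  -- double counting
  have hcount : ∑ y' ∈ B.erase x, (𝓑.filter fun D => x ∈ D ∧ y' ∈ D).card
      = ∑ D ∈ 𝓑.filter (fun D => x ∈ D), (B.erase x ∩ D).card := by
    calc ∑ y' ∈ B.erase x, (𝓑.filter fun D => x ∈ D ∧ y' ∈ D).card
        = ∑ y' ∈ B.erase x, ∑ D ∈ 𝓑, if x ∈ D ∧ y' ∈ D then 1 else 0 := by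
          simp only [Finset.card_filter]
      _ = ∑ D ∈ 𝓑, ∑ y' ∈ B.erase x, if x ∈ D ∧ y' ∈ D then 1 else 0 :=
          Finset.sum_comm
      _ = ∑ D ∈ 𝓑, if x ∈ D then (B.erase x ∩ D).card else 0 := by
          refine Finset.sum_congr rfl fun D hD => ?_
          by_cases hxD : x ∈ D
          · simp only [hxD, true_and, if_true]
            rw [← Finset.card_filter, Finset.filter_mem_eq_inter]
          · simp [hxD]
      _ = ∑ D ∈ 𝓑.filter (fun D => x ∈ D), (B.erase x ∩ D).card :=
          (Finset.sum_filter _ _).symm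
  -- LHS of hcount
  have hLHS : ∑ y' ∈ B.erase x, (𝓑.filter fun D => x ∈ D ∧ y' ∈ D).card
      = (B.erase x).card * l := by
    have hc : ∀ y' ∈ B.erase x, (𝓑.filter fun D => x ∈ D ∧ y' ∈ D).card = l := by
      intro y' hy'
      exact hl x y' fun h => (Finset.mem_erase.mp hy').1 h.symm
    rw [Finset.sum_congr rfl hc, Finset.sum_const, smul_eq_mul]
  -- RHS of hcount: split off B
  have hBfil : B ∈ 𝓑.filter (fun D => x ∈ D) := by simp [hB, hxB]
  have hterm : ∀ D ∈ (𝓑.filter (fun D => x ∈ D)).erase B, (B.erase x ∩ D).card = m - 1 := by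
    intro D hD
    have hDB := (Finset.mem_erase.mp hD).1
    have hD' := Finset.mem_filter.mp (Finset.mem_erase.mp hD).2
    have hint : 2 * (B ∩ D).card = k := key B hB D hD'.1 (Ne.symm hDB)
    have hxBD : x ∈ B ∩ D := Finset.mem_inter.mpr ⟨hxB, hD'.2⟩
    have heq : B.erase x ∩ D = (B ∩ D).erase x := by
      ext z; simp only [Finset.mem_erase, Finset.mem_inter]; tauto
    rw [heq, Finset.card_erase_of_mem hxBD]
    omega
  have hBterm : (B.erase x ∩ B).card = (B.erase x).card := by
    rw [Finset.inter_eq_left.mpr (Finset.erase_subset _ _)]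
  have hRHS : ∑ D ∈ 𝓑.filter (fun D => x ∈ D), (B.erase x ∩ D).card
      = ((𝓑.filter (fun D => x ∈ D)).erase B).card * (m - 1) + (B.erase x).card := by
    rw [← Finset.sum_erase_add _ _ hBfil, Finset.sum_congr rfl hterm, Finset.sum_const,
      smul_eq_mul, hBterm]
  have hBex : (B.erase x).card = 2 * m - 1 := by
    rw [Finset.card_erase_of_mem hxB, hk B hB]
    omega
  have herase : ((𝓑.filter (fun D => x ∈ D)).erase B).card = 2 * l - 1 := by
    rw [Finset.card_erase_of_mem hBfil, hrx]
  have hl1 : 1 ≤ l := by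
    rw [← hlxy]
    exact Finset.card_pos.mpr ⟨B, hBmem⟩
  -- final equation: (2m-1) l = (2l-1)(m-1) + (2m-1)
  rw [hLHS, hRHS, hBex, herase] at hcount
  -- conclude m = l
  have arith : ∀ a b : ℕ, 1 ≤ a → 1 ≤ b →
      (2 * a - 1) * b = (2 * b - 1) * (a - 1) + (2 * a - 1) → a = b := by
    intro a b ha hb h
    obtain ⟨a', rfl⟩ := Nat.exists_eq_add_of_le ha
    obtain ⟨b', rfl⟩ := Nat.exists_eq_add_of_le hb
    have h1 : 2 * (1 + a') - 1 = 2 * a' + 1 := by omega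
    have h2 : 2 * (1 + b') - 1 = 2 * b' + 1 := by omega
    have h3 : 1 + a' - 1 = a' := by omega
    rw [h1, h2, h3] at h
    zify at h ⊢
    linear_combination -h
  exact arith m l hm1 hl1 hcount
end

section
/- Let (X, 𝓑) be a simple (2^n − 1, 2^(n−1), 2^(n−2))-BIBD (with n ≥ 2) whose number of blocks equals its number of points and whose incidence matrix has rank exactly n over 𝔽₂. Then for all distinct blocks B, C ∈ 𝓑, the symmetric difference B Δ C is again a block of 𝓑. -/
open scoped symmDiff

/-- The incidence matrix of the design `(X, 𝓑)` over `𝔽₂ = ZMod 2`: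
rows are indexed by points, columns by blocks, with entry `1` iff
the point belongs to the block. -/
def incidenceMatrix (X : Type*) [DecidableEq X]
    (𝓑 : Finset (Finset X)) : Matrix X {B // B ∈ 𝓑} (ZMod 2) :=
  fun x B => if x ∈ B.1 then 1 else 0

theorem stmt_4 {X : Type*} [Fintype X] [DecidableEq X]
    (𝓑 : Finset (Finset X)) (n : ℕ) (hn : 2 ≤ n)
    (hBIBD : IsBIBD X 𝓑 (2 ^ n - 1) (2 ^ (n - 1)) (2 ^ (n - 2)))
    (hsymm : 𝓑.card = Fintype.card X)
    (hrank : (incidenceMatrix X 𝓑).rank = n) :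
    ∀ B ∈ 𝓑, ∀ C ∈ 𝓑, B ≠ C → B ∆ C ∈ 𝓑 := by
  classical
  obtain ⟨hcard, hblk, hpair, hkv, hk2⟩ := hBIBD
  set M := incidenceMatrix X 𝓑 with hM
  set χ : Finset X → (X → ZMod 2) := fun B x => if x ∈ B then 1 else 0 with hχ
  -- χ is injective
  have hχinj : Function.Injective χ := by
    intro B C h
    ext x
    have hx := congrFun h x
    by_cases hB : x ∈ B <;> by_cases hC : x ∈ C <;>
      simp [hχ, hB, hC] at hx ⊢ <;> tauto
  -- χ of a symmetric difference is the sum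
  have hχadd : ∀ B C : Finset X, χ (B ∆ C) = χ B + χ C := by
    intro B C
    funext x
    by_cases hB : x ∈ B <;> by_cases hC : x ∈ C <;>
      simp [hχ, Finset.mem_symmDiff, hB, hC] <;> decide
  -- the column space
  set W : Submodule (ZMod 2) (X → ZMod 2) := LinearMap.range M.mulVecLin with hW
  -- columns belong to W
  have hcol : ∀ B : {B // B ∈ 𝓑}, χ B.1 ∈ W := by
    intro B
    rw [hW, Matrix.range_mulVecLin]
    apply Submodule.subset_span
    refine ⟨B, ?_⟩
    funext x
    simp [Matrix.transpose_apply, hM, incidenceMatrix, hχ]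
  -- χ of a block is nonzero
  have hχne : ∀ B ∈ 𝓑, χ B ≠ 0 := by
    intro B hB h0
    have : B.card = 2 ^ (n - 1) := hblk B hB
    have hBne : B.Nonempty := by
      rw [← Finset.card_pos, this]
      positivity
    obtain ⟨x, hx⟩ := hBne
    have := congrFun h0 x
    simp [hχ, hx] at this
  have : Fintype W := Fintype.ofFinite _
  -- card W = 2 ^ n
  have hcardW : Fintype.card W = 2 ^ n := by
    have hfr : Module.finrank (ZMod 2) W = n := hrank
    rw [Module.card_eq_pow_finrank (K := ZMod 2) (V := W), ZMod.card, hfr]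
  -- the map from blocks to nonzero elements of W
  set g : {B // B ∈ 𝓑} → {w : W // w ≠ 0} := fun B =>
    ⟨⟨χ B.1, hcol B⟩, by
      intro h
      exact hχne B.1 B.2 (by simpa [Submodule.mk_eq_zero] using congrArg Subtype.val h)⟩
    with hg
  have hginj : Function.Injective g := by
    intro B C h
    have : χ B.1 = χ C.1 := by
      simpa [hg] using congrArg (fun w => (w.1 : X → ZMod 2)) h
    exact Subtype.ext (hχinj this)
  have hgcard : Fintype.card {B // B ∈ 𝓑} = Fintype.card {w : W // w ≠ 0} := by
    have h1 : Fintype.card {w : W // w ≠ 0} =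
        Fintype.card W - Fintype.card {w : W // w = 0} :=
      Fintype.card_subtype_compl _
    rw [Fintype.card_coe, hsymm, hcard, h1, hcardW, Fintype.card_subtype_eq]
  have hgsurj : Function.Surjective g :=
    ((Fintype.bijective_iff_injective_and_card g).2 ⟨hginj, hgcard⟩).2
  -- main argument
  intro B hB C hC hne
  have hmem : χ B + χ C ∈ W := W.add_mem (hcol ⟨B, hB⟩) (hcol ⟨C, hC⟩)
  have hBC : B ∆ C ≠ ∅ := by
    rw [← Finset.bot_eq_empty, Ne, symmDiff_eq_bot]
    exact hne
  have hne0 : χ B + χ C ≠ 0 := by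
    rw [← hχadd]
    intro h0
    obtain ⟨x, hx⟩ := Finset.nonempty_iff_ne_empty.2 hBC
    have := congrFun h0 x
    simp [hχ, hx] at this
  obtain ⟨D, hD⟩ := hgsurj ⟨⟨χ B + χ C, hmem⟩, by
    intro h
    exact hne0 (by simpa [Submodule.mk_eq_zero] using congrArg Subtype.val h)⟩
  have hχD : χ D.1 = χ B + χ C := by
    simpa [hg] using congrArg (fun w => (w.1 : X → ZMod 2)) hD
  have : B ∆ C = D.1 := hχinj (by rw [hχadd, hχD])
  rw [this]
  exact D.2
end

section
/- Let (X, 𝓑) be a simple (v, k, λ)-BIBD such that for all distinct blocks B, C ∈ 𝓑 the symmetric difference B Δ C is again a block of 𝓑, and let n be the rank over 𝔽₂ of the incidence matrix of (X, 𝓑). Then the number of blocks satisfies |𝓑| = 2^n − 1. -/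
open scoped symmDiff

/-!
Over `𝔽₂` the characteristic vectors of finite sets add as symmetric differences, and the
columns of the incidence matrix are the characteristic vectors of the blocks. So the closure
hypothesis says that the columns together with the zero vector (the empty set, which is not a
block) are closed under addition, hence form the column space itself. That space has `2 ^ n`
elements, one of which is zero.
-/

open Module Submodule

section CharTwoVectorSpace

variable {V : Type*} [AddCommGroup V] [Module (ZMod 2) V]

theorem add_self_eq_zero_of_zmod_two (x : V) : x + x = 0 := by
  rw [← two_smul (ZMod 2), show (2 : ZMod 2) = 0 from rfl, zero_smul]

theorem coe_span_eq_insert_zero (s : Finset V)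
    (hadd : ∀ x ∈ s, ∀ y ∈ s, x ≠ y → x + y ∈ s) :
    (span (ZMod 2) (s : Set V) : Set V) = insert 0 (s : Set V) := by
  refine subset_antisymm (fun z hz => ?_) (Set.insert_subset (zero_mem _) subset_span)
  induction hz using span_induction with
  | mem x hx => exact Or.inr hx
  | zero => exact Or.inl rfl
  | add x y _ _ hx hy =>
    rcases hx with rfl | hx
    · rwa [zero_add]
    rcases hy with rfl | hy
    · rw [add_zero]; exact Or.inr hx
    by_cases hxy : x = y
    · subst hxy; exact Or.inl (add_self_eq_zero_of_zmod_two x)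
    · exact Or.inr (hadd x hx y hy hxy)
  | smul c x _ hx =>
    fin_cases c
    · exact Or.inl (zero_smul _ x)
    · exact (one_smul (ZMod 2) x).symm ▸ hx

theorem card_add_one_eq_two_pow_finrank_span (s : Finset V) (h0 : (0 : V) ∉ s)
    (hadd : ∀ x ∈ s, ∀ y ∈ s, x ≠ y → x + y ∈ s) :
    s.card + 1 = 2 ^ finrank (ZMod 2) (span (ZMod 2) (s : Set V)) := by
  classical
  have hspan := coe_span_eq_insert_zero s hadd
  have : Finite (span (ZMod 2) (s : Set V)) := by
    rw [← SetLike.coe_sort_coe, hspan]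
    exact (s.finite_toSet.insert 0).to_subtype
  have : Module.Finite (ZMod 2) (span (ZMod 2) (s : Set V)) := Module.Finite.of_finite
  calc s.card + 1 = (insert 0 s).card := (Finset.card_insert_of_notMem h0).symm
    _ = Nat.card (span (ZMod 2) (s : Set V)) := by
      rw [← SetLike.coe_sort_coe, hspan, ← Finset.coe_insert, Nat.card_coe_set_eq,
        Set.ncard_coe_finset]
    _ = 2 ^ finrank (ZMod 2) (span (ZMod 2) (s : Set V)) := by
      rw [natCard_eq_pow_finrank (K := ZMod 2), Nat.card_zmod]

end CharTwoVectorSpace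

section IncidenceVectors

variable {X : Type*} [DecidableEq X]

def incidenceVector (B : Finset X) : X → ZMod 2 :=
  fun x => if x ∈ B then 1 else 0

theorem incidenceVector_symmDiff (B C : Finset X) :
    incidenceVector (B ∆ C) = incidenceVector B + incidenceVector C := by
  funext x
  simp only [incidenceVector, Pi.add_apply, Finset.mem_symmDiff]
  by_cases hB : x ∈ B <;> by_cases hC : x ∈ C <;> simp [hB, hC]
  decide

theorem incidenceVector_injective : Function.Injective (incidenceVector (X := X)) := by
  intro B C h
  ext x
  have hx := congrFun h x
  simp only [incidenceVector] at hx
  by_cases hB : x ∈ B <;> by_cases hC : x ∈ C <;> simp_all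

theorem incidenceVector_empty : incidenceVector (∅ : Finset X) = 0 := by
  funext x
  simp [incidenceVector]

theorem range_col_incidenceMatrix (𝓑 : Finset (Finset X)) :
    Set.range (incidenceMatrix X 𝓑).col = incidenceVector '' ↑𝓑 := by
  ext y
  simp only [Set.mem_range, Set.mem_image, Finset.mem_coe]
  constructor
  · rintro ⟨B, rfl⟩
    exact ⟨B.1, B.2, rfl⟩
  · rintro ⟨B, hB, rfl⟩
    exact ⟨⟨B, hB⟩, rfl⟩

end IncidenceVectors

theorem IsBIBD.empty_notMem {X : Type*} [Fintype X] [DecidableEq X]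
    {𝓑 : Finset (Finset X)} {v k l : ℕ} (h : IsBIBD X 𝓑 v k l) : ∅ ∉ 𝓑 := by
  obtain ⟨-, hcard, -, -, hk⟩ := h
  intro hmem
  have := hcard ∅ hmem
  rw [Finset.card_empty] at this
  omega

theorem stmt_5 {X : Type*} [Fintype X] [DecidableEq X]
    (𝓑 : Finset (Finset X)) (v k l n : ℕ)
    (hBIBD : IsBIBD X 𝓑 v k l)
    (hΔ : ∀ B ∈ 𝓑, ∀ C ∈ 𝓑, B ≠ C → B ∆ C ∈ 𝓑)
    (hn : (incidenceMatrix X 𝓑).rank = n) :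
    𝓑.card = 2 ^ n - 1 := by
  set s := 𝓑.image incidenceVector
  have h0 : (0 : X → ZMod 2) ∉ s := by
    rw [← incidenceVector_empty, incidenceVector_injective.mem_finset_image]
    exact hBIBD.empty_notMem
  have hadd : ∀ x ∈ s, ∀ y ∈ s, x ≠ y → x + y ∈ s := by
    simp only [s, Finset.mem_image]
    rintro _ ⟨B, hB, rfl⟩ _ ⟨C, hC, rfl⟩ hBC
    exact ⟨B ∆ C, hΔ B hB C hC (ne_of_apply_ne _ hBC), incidenceVector_symmDiff B C⟩
  have hcard : s.card + 1 = 2 ^ n := by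
    rw [card_add_one_eq_two_pow_finrank_span s h0 hadd, Finset.coe_image,
      ← range_col_incidenceMatrix, ← Matrix.rank_eq_finrank_span_cols, hn]
  rw [Finset.card_image_of_injective _ incidenceVector_injective] at hcard
  omega
end

section
/- Let (X, 𝓑) be a simple (2^n − 1, 2^(n−1), 2^(n−2))-BIBD (with n ≥ 2) whose number of blocks equals its number of points. Then the rank over 𝔽₂ of its incidence matrix is at least n. -/
/-!
The blocks of a simple design are distinct, so the incidence matrix has `2 ^ n - 1` pairwise
distinct columns. They all lie in the column space, which over `𝔽₂` has `2 ^ rank` elements,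
and `2 ^ n - 1 ≤ 2 ^ r` forces `n ≤ r` once `n ≥ 2`.
-/

theorem Matrix.card_le_card_pow_rank_of_injective_col {m n F : Type*} [Fintype m] [Fintype n]
    [Field F] [Finite F] (A : Matrix m n F) (hA : Function.Injective A.col) :
    Nat.card n ≤ Nat.card F ^ A.rank := by
  rw [A.rank_eq_finrank_span_cols, ← Module.natCard_eq_pow_finrank]
  exact Nat.card_le_card_of_injective
    (fun j => (⟨A.col j, Submodule.subset_span ⟨j, rfl⟩⟩ : Submodule.span F (Set.range A.col)))
    fun i j h => hA (congrArg Subtype.val h)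

theorem incidenceMatrix_col_injective (X : Type*) [DecidableEq X] (𝓑 : Finset (Finset X)) :
    Function.Injective (incidenceMatrix X 𝓑).col := by
  intro B C h
  ext x
  have hx := congrFun h x
  simp only [Matrix.col_apply, incidenceMatrix] at hx
  split_ifs at hx <;> simp_all

theorem Nat.le_of_two_pow_sub_one_le_two_pow {n r : ℕ} (hn : 2 ≤ n) (h : 2 ^ n - 1 ≤ 2 ^ r) :
    n ≤ r := by
  by_contra! hrn
  have hr : 2 ^ r * 2 ≤ 2 ^ n := pow_succ 2 r ▸ Nat.pow_le_pow_right two_pos hrn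
  have hn4 : 2 ^ 2 ≤ 2 ^ n := Nat.pow_le_pow_right two_pos hn
  omega

theorem stmt_8 {X : Type*} [Fintype X] [DecidableEq X]
    (𝓑 : Finset (Finset X)) (n : ℕ) (hn : 2 ≤ n)
    (hBIBD : IsBIBD X 𝓑 (2 ^ n - 1) (2 ^ (n - 1)) (2 ^ (n - 2)))
    (hsymm : 𝓑.card = Fintype.card X) :
    n ≤ (incidenceMatrix X 𝓑).rank := by
  have hcols := (incidenceMatrix X 𝓑).card_le_card_pow_rank_of_injective_col
    (incidenceMatrix_col_injective X 𝓑)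
  rw [Nat.card_eq_fintype_card, Fintype.card_coe, hsymm, hBIBD.1, Nat.card_zmod] at hcols
  exact Nat.le_of_two_pow_sub_one_le_two_pow hn hcols
end

section
/- Let (X, 𝓑) be a simple (2^n − 1, 2^(n−1), 2^(n−2))-BIBD (with n ≥ 2) whose number of blocks equals its number of points and whose incidence matrix has rank exactly n over 𝔽₂. Then (X, 𝓑) is isomorphic to the complementary design of PG(n − 1, 2): there exists a bijection f from X to the set of nonzero vectors of (ZMod 2)^n such that for every subset B of X, B is a block of 𝓑 if and only if the image f(B) equals {x ∈ (ZMod 2)^n : ∑ᵢ aᵢxᵢ = 1} for some nonzero a ∈ (ZMod 2)^n. -/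
/-- The block `B_a = {x : (ZMod 2)^n | ∑ i, a i * x i = 1}` of the
complementary design of `PG(n - 1, 2)`. -/
def PGCompBlock (n : ℕ) (a : Fin n → ZMod 2) : Set (Fin n → ZMod 2) :=
  {x | ∑ i, a i * x i = 1}

/-!
The column space `W` of the incidence matrix over `𝔽₂` has `2 ^ n` elements, and the
`2 ^ n - 1` block indicators are distinct nonzero elements of it, hence exactly its nonzero
vectors. Fixing a basis `b₁, …, bₙ` of `W` and sending a point `p` to `(b₁ p, …, bₙ p)`, the
block with indicator `∑ aᵢ bᵢ` goes to `{x | ∑ aᵢ xᵢ = 1}`. The point map avoids `0` because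
every point lies on a block, and it is injective because two points with equal coordinates
would lie on the same blocks, whereas the replication number `|W| / 2 = 2 ^ (n - 1)` exceeds
`λ = 2 ^ (n - 2)`; counting makes it a bijection onto the nonzero vectors.
-/

open Finset

theorem AddMonoidHom.card_mul_card_fiber {G M : Type*} [AddGroup G] [Fintype G] [AddMonoid M]
    [Fintype M] [DecidableEq M] (f : G →+ M) (hf : Function.Surjective f) (y : M) :
    Fintype.card M * #{g | f g = y} = Fintype.card G := by
  calc Fintype.card M * #{g | f g = y} = ∑ z, #{g | f g = z} := by
        rw [sum_congr rfl fun z _ => card_fiber_eq_of_mem_range f (hf z) (hf y), sum_const,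
          card_univ, smul_eq_mul]
    _ = Fintype.card G := (card_eq_sum_card_fiberwise fun g _ => mem_univ (f g)).symm

theorem ZMod.indicator_one_eq_iff {X : Type*} (s : Set X) (w : X → ZMod 2) :
    s.indicator 1 = w ↔ s = {p | w p = 1} := by
  constructor
  · rintro rfl
    ext p
    exact (Set.indicator_eq_one_iff_mem _).symm
  · rintro rfl
    funext p
    by_cases hp : w p = 1
    · simp [hp]
    · have : w p = 0 := by revert hp; generalize w p = c; revert c; decide
      simp [this]

theorem Set.indicator_one_ne_zero {X M₀ : Type*} [MulZeroOneClass M₀] [Nontrivial M₀]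
    {s : Set X} (hs : s.Nonempty) : s.indicator (1 : X → M₀) ≠ 0 := by
  obtain ⟨x, hx⟩ := hs
  intro h
  simpa [hx] using congrFun h x

theorem Set.image_eq_iff_eq_preimage {α β : Type*} {f : α → β} (hf : Function.Injective f)
    {s : Set α} {t : Set β} (ht : t ⊆ Set.range f) : f '' s = t ↔ s = f ⁻¹' t := by
  constructor
  · rintro rfl
    exact (Set.preimage_image_eq s hf).symm
  · rintro rfl
    exact Set.image_preimage_eq_iff.2 ht

theorem IsBIBD.exists_mem {X : Type*} [Fintype X] [DecidableEq X] {𝓑 : Finset (Finset X)}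
    {v k l : ℕ} (h : IsBIBD X 𝓑 v k l) (hl : 0 < l) (x : X) : ∃ B ∈ 𝓑, x ∈ B := by
  obtain ⟨hv, -, hpair, hkv, hk⟩ := h
  obtain ⟨y, hyx⟩ := Fintype.exists_ne_of_one_lt_card (by omega) x
  obtain ⟨B, hB⟩ := card_pos.1 (hl.trans_eq (hpair y x hyx).symm)
  exact ⟨B, (mem_filter.1 hB).1, (mem_filter.1 hB).2.2⟩

section PointCoords

variable {K X ι : Type*} [Semiring K] [Fintype ι] {W : Submodule K (X → K)}

/-- The coordinates of the evaluation functional at `p` in the basis dual to `b`. -/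
noncomputable def pointCoords (b : Module.Basis ι K W) (p : X) : ι → K := fun i => (b i : X → K) p

theorem coe_equivFun_symm_apply (b : Module.Basis ι K W) (a : ι → K) (p : X) :
    (b.equivFun.symm a : X → K) p = ∑ i, a i * pointCoords b p i := by
  simp [Module.Basis.equivFun_symm_apply, pointCoords]

theorem apply_eq_sum_repr_mul_pointCoords (b : Module.Basis ι K W) (w : W) (p : X) :
    (w : X → K) p = ∑ i, b.repr w i * pointCoords b p i := by
  rw [← coe_equivFun_symm_apply, ← b.equivFun_apply, LinearEquiv.symm_apply_apply]

end PointCoords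

section DesignCode

/-- The binary code of the design, spanned by the block indicators; `Matrix.rank` is its
dimension. -/
abbrev designCode {X : Type*} [DecidableEq X] (𝓑 : Finset (Finset X)) :
    Submodule (ZMod 2) (X → ZMod 2) :=
  LinearMap.range (incidenceMatrix X 𝓑).mulVecLin

variable {X : Type*} [DecidableEq X] {𝓑 : Finset (Finset X)}

theorem indicator_mem_designCode {B : Finset X} (hB : B ∈ 𝓑) :
    (B : Set X).indicator 1 ∈ designCode 𝓑 := by
  refine ⟨Pi.single ⟨B, hB⟩ 1, ?_⟩
  ext x
  simp [incidenceMatrix, Set.indicator_apply]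

theorem exists_mem_indicator_eq [Fintype X] (hne : ∀ B ∈ 𝓑, B.Nonempty)
    (hcard : Fintype.card (designCode 𝓑) ≤ #𝓑 + 1) {w : designCode 𝓑} (hw : w ≠ 0) :
    ∃ B ∈ 𝓑, (B : Set X).indicator 1 = (w : X → ZMod 2) := by
  have hsurj := surj_on_of_inj_on_of_card_le (s := 𝓑) (t := univ.erase (0 : designCode 𝓑))
    (fun B hB => ⟨(B : Set X).indicator 1, indicator_mem_designCode hB⟩)
    (fun B hB => mem_erase.2
      ⟨fun h => Set.indicator_one_ne_zero (coe_nonempty.2 (hne B hB)) (congrArg Subtype.val h),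
        mem_univ _⟩)
    (fun B₁ B₂ _ _ h => coe_inj.1 (Set.indicator_one_inj (ZMod 2) (congrArg Subtype.val h)))
    (by rw [card_erase_of_mem (mem_univ _), card_univ]; omega)
  obtain ⟨B, hB, h⟩ := hsurj w (mem_erase.2 ⟨hw, mem_univ _⟩)
  exact ⟨B, hB, congrArg Subtype.val h.symm⟩

theorem mem_iff_exists_indicator_eq [Fintype X] (hne : ∀ B ∈ 𝓑, B.Nonempty)
    (hcard : Fintype.card (designCode 𝓑) ≤ #𝓑 + 1) (B : Finset X) :
    B ∈ 𝓑 ↔ ∃ w : designCode 𝓑, w ≠ 0 ∧ (B : Set X).indicator 1 = (w : X → ZMod 2) := by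
  constructor
  · intro hB
    refine ⟨⟨_, indicator_mem_designCode hB⟩, fun h => ?_, rfl⟩
    exact Set.indicator_one_ne_zero (coe_nonempty.2 (hne B hB)) (congrArg Subtype.val h)
  · rintro ⟨w, hw, hBw⟩
    obtain ⟨B', hB', hB'w⟩ := exists_mem_indicator_eq hne hcard hw
    rwa [← coe_inj.1 (Set.indicator_one_inj (ZMod 2) (hB'w.trans hBw.symm))]

theorem card_filter_mem_eq [Fintype X] (hne : ∀ B ∈ 𝓑, B.Nonempty)
    (hcard : Fintype.card (designCode 𝓑) ≤ #𝓑 + 1) (x : X) :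
    #{B ∈ 𝓑 | x ∈ B} = #{w : designCode 𝓑 | (w : X → ZMod 2) x = 1} := by
  have hmem (B : Finset X) : (B : Set X).indicator (1 : X → ZMod 2) x = 1 ↔ x ∈ B := by
    rw [Set.indicator_eq_one_iff_mem, mem_coe]
  refine card_bij (fun B hB => ⟨_, indicator_mem_designCode (mem_filter.1 hB).1⟩) ?_ ?_ ?_
  · intro B hB
    simpa [hmem] using (mem_filter.1 hB).2
  · intro B₁ _ B₂ _ h
    exact coe_inj.1 (Set.indicator_one_inj (ZMod 2) (congrArg Subtype.val h))
  · intro w hw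
    have hw0 : w ≠ 0 := by
      rintro rfl
      simp at hw
    obtain ⟨B, hB, hBw⟩ := exists_mem_indicator_eq hne hcard hw0
    refine ⟨B, mem_filter.2 ⟨hB, (hmem B).1 ?_⟩, Subtype.ext hBw⟩
    simpa [hBw] using hw

theorem two_mul_card_filter_mem [Fintype X] (hne : ∀ B ∈ 𝓑, B.Nonempty)
    (hcard : Fintype.card (designCode 𝓑) ≤ #𝓑 + 1) {x : X} (hx : ∃ B ∈ 𝓑, x ∈ B) :
    2 * #{B ∈ 𝓑 | x ∈ B} = Fintype.card (designCode 𝓑) := by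
  let ev : designCode 𝓑 →ₗ[ZMod 2] ZMod 2 := (LinearMap.proj x).comp (designCode 𝓑).subtype
  have hev : ev ≠ 0 := by
    obtain ⟨B, hB, hxB⟩ := hx
    intro h
    simpa [ev, hxB] using LinearMap.congr_fun h ⟨_, indicator_mem_designCode hB⟩
  rw [card_filter_mem_eq hne hcard x]
  have := ev.toAddMonoidHom.card_mul_card_fiber (LinearMap.surjective_of_ne_zero hev) 1
  rwa [ZMod.card] at this

theorem pointCoords_ne_zero {ι : Type*} [Fintype ι] (b : Module.Basis ι (ZMod 2) (designCode 𝓑))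
    {x : X} (hx : ∃ B ∈ 𝓑, x ∈ B) : pointCoords b x ≠ 0 := by
  obtain ⟨B, hB, hxB⟩ := hx
  intro h
  have := apply_eq_sum_repr_mul_pointCoords b ⟨_, indicator_mem_designCode hB⟩ x
  simp [h, hxB] at this

theorem pointCoords_injective {ι : Type*} [Fintype ι]
    (b : Module.Basis ι (ZMod 2) (designCode 𝓑))
    (hlt : ∀ x y, x ≠ y → #{B ∈ 𝓑 | x ∈ B ∧ y ∈ B} < #{B ∈ 𝓑 | x ∈ B}) :
    Function.Injective (pointCoords b) := by
  intro x y hxy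
  by_contra hne
  have hsame : ∀ B ∈ 𝓑, x ∈ B → y ∈ B := fun B hB hxB => by
    have hw (p : X) := apply_eq_sum_repr_mul_pointCoords b ⟨_, indicator_mem_designCode hB⟩ p
    have := hw x
    rw [hxy, ← hw y] at this
    simpa [Set.indicator_apply, hxB] using this
  refine (hlt x y hne).ne (congrArg card (filter_congr fun B hB => ?_))
  exact ⟨And.left, fun hxB => ⟨hxB, hsame B hB hxB⟩⟩

theorem mem_iff_image_eq_pgCompBlock [Fintype X] (hne : ∀ B ∈ 𝓑, B.Nonempty)
    (hcard : Fintype.card (designCode 𝓑) ≤ #𝓑 + 1) {n : ℕ}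
    (b : Module.Basis (Fin n) (ZMod 2) (designCode 𝓑)) (f : X ≃ {v : Fin n → ZMod 2 // v ≠ 0})
    (hf : ∀ p, (f p : Fin n → ZMod 2) = pointCoords b p) (B : Finset X) :
    B ∈ 𝓑 ↔ ∃ a : Fin n → ZMod 2, a ≠ 0 ∧
      (fun p : X => (f p : Fin n → ZMod 2)) '' ↑B = PGCompBlock n a := by
  have hrange (a : Fin n → ZMod 2) :
      PGCompBlock n a ⊆ Set.range fun p : X => (f p : Fin n → ZMod 2) := by
    intro v hv
    have hv0 : v ≠ 0 := by
      rintro rfl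
      simp [PGCompBlock] at hv
    exact ⟨f.symm ⟨v, hv0⟩, by simp⟩
  rw [mem_iff_exists_indicator_eq hne hcard, b.equivFun.symm.surjective.exists]
  refine exists_congr fun a => and_congr (LinearEquiv.map_ne_zero_iff _) ?_
  have hinj : Function.Injective fun p : X => (f p : Fin n → ZMod 2) :=
    Subtype.val_injective.comp f.injective
  rw [ZMod.indicator_one_eq_iff, Set.image_eq_iff_eq_preimage hinj (hrange a)]
  simp only [coe_equivFun_symm_apply, PGCompBlock, Set.preimage_ofPred_eq, hf]

end DesignCode

theorem stmt_9 {X : Type*} [Fintype X] [DecidableEq X]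
    (𝓑 : Finset (Finset X)) (n : ℕ) (hn : 2 ≤ n)
    (hBIBD : IsBIBD X 𝓑 (2 ^ n - 1) (2 ^ (n - 1)) (2 ^ (n - 2)))
    (hsymm : 𝓑.card = Fintype.card X)
    (hrank : (incidenceMatrix X 𝓑).rank = n) :
    ∃ f : X ≃ {x : Fin n → ZMod 2 // x ≠ 0},
      ∀ B : Finset X, B ∈ 𝓑 ↔
        ∃ a : Fin n → ZMod 2, a ≠ 0 ∧
          (fun p : X => (f p : Fin n → ZMod 2)) '' ↑B = PGCompBlock n a := by
  obtain ⟨m, rfl⟩ : ∃ m, n = m + 2 := ⟨n - 2, by omega⟩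
  have hx := hBIBD.exists_mem (by positivity)
  obtain ⟨hv, hk, hl, -, -⟩ := hBIBD
  rw [show m + 2 - 2 = m by omega] at hl
  have hW : Fintype.card (designCode 𝓑) = 2 ^ (m + 2) := by
    rw [Module.card_eq_pow_finrank (K := ZMod 2), ZMod.card]
    exact congrArg _ hrank
  have hne : ∀ B ∈ 𝓑, B.Nonempty := fun B hB => card_pos.1 (by rw [hk B hB]; positivity)
  have hcard : Fintype.card (designCode 𝓑) ≤ #𝓑 + 1 := by rw [hW, hsymm, hv]; omega
  let b := Module.finBasisOfFinrankEq (ZMod 2) (designCode 𝓑) hrank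
  have hinj : Function.Injective (pointCoords b) := pointCoords_injective b fun x y hxy => by
    have hr := two_mul_card_filter_mem hne hcard (hx x)
    rw [hl x y hxy]
    rw [hW, pow_succ, pow_succ] at hr
    have : 0 < 2 ^ m := by positivity
    omega
  have hcardV : Fintype.card {v : Fin (m + 2) → ZMod 2 // v ≠ 0} = Fintype.card X := by
    simp [Fintype.card_subtype_compl, ZMod.card, hv]
  let f : X ≃ {v : Fin (m + 2) → ZMod 2 // v ≠ 0} := Equiv.ofBijective
    (fun x => ⟨pointCoords b x, pointCoords_ne_zero b (hx x)⟩)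
    ((Fintype.bijective_iff_injective_and_card _).2
      ⟨fun x y h => hinj (congrArg Subtype.val h), hcardV.symm⟩)
  exact ⟨f, mem_iff_image_eq_pgCompBlock hne hcard b f fun _ => rfl⟩
end
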